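/- arXiv:1911.08458 — 3 statements merged into one kernel-verified Lean document; each statement's English description precedes it below -/
import Mathlib

section
/- For every fixed positive rational number r there exists B₀ such that for all real B ≥ B₀, the minor arithmetic factor satisfies A₂(B) ≤ exp(10·(2r+1)·B²·(log log B)²), i.e. (2r+1)·∑_{b: φ(b) ≤ B} φ(b)·∑_{p prime, p | b} (log p)/(p−1) ≤ 10·(2r+1)·B²·(log log B)². -/
/-!
Every `b ∈ Ψ_B` is at most `N := ⌊K B⌋`, where `K ≪ log log B` bounds `b / φ(b)` on `Ψ_B`. Bounding
`φ(b) ≤ B` and extending the sum to all `b ≤ N`, the left side is at most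
`B ∑_{b ≤ N} ∑_{p ∣ b} log p / (p - 1) ≤ B N ∑_p log p / ((p - 1) p) ≪ B² log log B`, which is
eventually below `10 B² (log log B)²`.

For `b / φ(b) = ∏_{p ∣ b} p / (p - 1) ≤ exp ∑_{p ∣ b} 1 / (p - 1)`, split the primes at
`m = ⌊log B⌋`: at most `log B / log m` prime factors of `b` exceed `m`, since the product of
their `p - 1` divides `φ(b) ≤ B`, and the smaller ones contribute `log log m + O(1)` by Mertens'
second theorem. That theorem follows by partial summation from Mertens' first,
`∑_{p ≤ n} log p / p ≤ log n + log 4`, which in turn comes from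
`∑_{d ≤ n} Λ(d) ⌊n / d⌋ = ∑_{m ≤ n} log m ≤ n log n` and Chebyshev's bound `θ(n) ≤ n log 4`.
-/

open Filter Real

/-- The denominator set `Ψ_B`: positive integers whose totient is at most `B`. -/
def PsiSet (B : ℝ) : Set ℕ := {b : ℕ | 0 < b ∧ (Nat.totient b : ℝ) ≤ B}

open Finset
open scoped ArithmeticFunction.vonMangoldt ArithmeticFunction.zeta Nat

theorem sum_vonMangoldt_mul_div_eq_sum_log (n : ℕ) :
    ∑ d ∈ Ioc 0 n, Λ d * (n / d : ℕ) = ∑ m ∈ Ioc 0 n, log m := by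
  rw [← ArithmeticFunction.sum_Ioc_mul_zeta_eq_sum, ArithmeticFunction.vonMangoldt_mul_zeta]
  simp [ArithmeticFunction.log_apply]

theorem sum_primes_log_mul_div_le (n : ℕ) :
    ∑ p ∈ Ioc 0 n with p.Prime, log p * (n / p : ℕ) ≤ n * log n := by
  calc _ ≤ ∑ d ∈ Ioc 0 n, Λ d * (n / d : ℕ) := by
        rw [sum_filter]
        gcongr with d
        split_ifs with hd
        · rw [ArithmeticFunction.vonMangoldt_apply_prime hd]
        · exact mul_nonneg ArithmeticFunction.vonMangoldt_nonneg (Nat.cast_nonneg _)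
    _ = ∑ m ∈ Ioc 0 n, log m := sum_vonMangoldt_mul_div_eq_sum_log n
    _ ≤ ∑ _m ∈ Ioc 0 n, log n := by
        gcongr with m hm
        · exact Nat.cast_pos.2 (mem_Ioc.1 hm).1
        · exact (mem_Ioc.1 hm).2
    _ = n * log n := by simp

theorem sum_primes_log_div_le (n : ℕ) :
    ∑ p ∈ Ioc 0 n with p.Prime, log p / p ≤ log n + log 4 := by
  rcases n.eq_zero_or_pos with rfl | hn
  · simp only [Ioc_self, filter_empty, sum_empty, Nat.cast_zero, log_zero, zero_add]
    positivity
  have hn' : (0 : ℝ) < n := by exact_mod_cast hn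
  rw [← mul_le_mul_iff_right₀ hn']
  calc n * ∑ p ∈ Ioc 0 n with p.Prime, log p / p
      = ∑ p ∈ Ioc 0 n with p.Prime, log p * (n / p : ℝ) := by
        rw [mul_sum]; congr! 1; ring
    _ ≤ ∑ p ∈ Ioc 0 n with p.Prime, (log p * (n / p : ℕ) + log p) := by
        gcongr with p hp
        rw [← mul_add_one]
        gcongr
        rw [← Nat.floor_div_eq_div (K := ℝ)]
        exact (Nat.lt_floor_add_one _).le
    _ = ∑ p ∈ Ioc 0 n with p.Prime, log p * (n / p : ℕ) + Chebyshev.theta n := by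
        rw [sum_add_distrib, Chebyshev.theta, Nat.floor_natCast]
    _ ≤ n * log n + log 4 * n :=
        add_le_add (sum_primes_log_mul_div_le n) (Chebyshev.theta_le_log4_mul_x hn'.le)
    _ = n * (log n + log 4) := by ring

theorem log_div_sub_one_nonneg (n : ℕ) : 0 ≤ log n / ((n : ℝ) - 1) := by
  rcases n with _ | n
  · simp
  · exact div_nonneg (log_natCast_nonneg _) (by push_cast; linarith [(n.cast_nonneg : (0:ℝ) ≤ n)])

theorem summable_log_div_sub_one_div : Summable fun n : ℕ => log n / (n - 1) / n := by
  refine Summable.of_nonneg_of_le (fun n => div_nonneg (log_div_sub_one_nonneg n) n.cast_nonneg)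
    (fun n => ?_) ((summable_nat_rpow.2 (by norm_num : (-3/2 : ℝ) < -1)).mul_left 4)
  rcases lt_or_ge n 2 with hn | hn
  · interval_cases n <;> simp
  have hn' : (2 : ℝ) ≤ n := by exact_mod_cast hn
  have hpos : (0 : ℝ) < n := by linarith
  have hlog : log n ≤ 2 * (n : ℝ) ^ (1/2 : ℝ) := by
    have := log_le_rpow_div hpos.le (by norm_num : (0:ℝ) < 1/2)
    linarith
  have hrpow : (n : ℝ) ^ (-3/2 : ℝ) * n ^ 2 = n ^ (1/2 : ℝ) := by
    rw [← rpow_natCast, ← rpow_add hpos]; norm_num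
  rw [div_div, div_le_iff₀ (by nlinarith)]
  nlinarith [rpow_nonneg hpos.le (1/2 : ℝ), rpow_nonneg hpos.le (-3/2 : ℝ)]

theorem sum_primes_log_div_sub_one_le (n : ℕ) :
    ∑ p ∈ Ioc 0 n with p.Prime, log p / (p - 1) ≤
      log n + log 4 + ∑' k : ℕ, log k / (k - 1) / k := by
  have hsplit : ∀ p ∈ {p ∈ Ioc 0 n | p.Prime},
      log p / (p - 1) = log p / p + log p / (p - 1) / p := by
    intro p hp
    have hp : (2 : ℝ) ≤ p := by exact_mod_cast (mem_filter.1 hp).2.two_le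
    field_simp [show (p : ℝ) - 1 ≠ 0 by linarith]
    ring
  rw [sum_congr rfl hsplit, sum_add_distrib]
  exact add_le_add (sum_primes_log_div_le n) (summable_log_div_sub_one_div.sum_le_tsum _
    fun k _ => div_nonneg (log_div_sub_one_nonneg k) k.cast_nonneg)

theorem exists_sum_div_log_le_log_log {a : ℕ → ℝ} {c : ℝ}
    (ha : ∀ n ≥ 2, ∑ k ∈ Ioc 0 n, a k ≤ log n + c) :
    ∃ C, ∀ n ≥ 2, ∑ k ∈ Ioc 0 n, a k / log k ≤ log (log n) + C := by
  -- Abel summation against `1 / log`: with `S n = ∑_{k ≤ n} a k`, the increment of `F` at `n` is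
  -- `(S n - c) (1 / log n - 1 / log (n + 1)) - log (log (n + 1) / log n)`; as `S n - c ≤ log n`,
  -- the inequality `1 - x⁻¹ ≤ log x` makes it nonpositive.
  set F : ℕ → ℝ := fun n =>
    ∑ k ∈ Ioc 0 n, a k / log k - (∑ k ∈ Ioc 0 n, a k - c) / log n - log (log n) with hF
  have hstep : ∀ n ≥ 2, F (n + 1) ≤ F n := by
    intro n hn
    have hu : 0 < log n := log_pos (by exact_mod_cast hn)
    have huv : log n ≤ log (n + 1) := log_le_log (by positivity) (by linarith)
    have hv : 0 < log (n + 1) := hu.trans_le huv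
    have key : (∑ k ∈ Ioc 0 n, a k - c) * ((log n)⁻¹ - (log (n + 1))⁻¹) ≤
        log (log (n + 1)) - log (log n) := by
      calc _ ≤ log n * ((log n)⁻¹ - (log (n + 1))⁻¹) := by
            gcongr
            · exact sub_nonneg.2 (inv_anti₀ hu huv)
            · linarith [ha n hn]
        _ = 1 - (log (n + 1) / log n)⁻¹ := by field_simp
        _ ≤ log (log (n + 1) / log n) := one_sub_inv_le_log_of_pos (by positivity)
        _ = _ := log_div hv.ne' hu.ne'
    simp only [hF, sum_Ioc_succ_top (Nat.zero_le n), Nat.cast_add_one]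
    rw [← sub_nonneg] at key ⊢
    convert key using 1
    field_simp
    ring
  refine ⟨F 2 + 1, fun n hn => ?_⟩
  have hFn : F n ≤ F 2 := by
    induction n, hn using Nat.le_induction with
    | base => exact le_rfl
    | succ n hn ih => exact (hstep n hn).trans ih
  have hu : 0 < log n := log_pos (by exact_mod_cast hn)
  have hquot : (∑ k ∈ Ioc 0 n, a k - c) / log n ≤ 1 :=
    div_le_one_of_le₀ (by linarith [ha n hn]) hu.le
  simp only [hF] at hFn ⊢
  linarith

theorem exists_sum_primes_inv_sub_one_le :
    ∃ C, ∀ n ≥ (2 : ℕ), ∑ p ∈ Ioc 0 n with p.Prime, 1 / ((p : ℝ) - 1) ≤ log (log n) + C := by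
  obtain ⟨C, hC⟩ := exists_sum_div_log_le_log_log
    (a := fun k => if k.Prime then log k / (k - 1) else 0)
    (c := log 4 + ∑' k : ℕ, log k / (k - 1) / k)
    fun n _ => by simpa only [← sum_filter, ← add_assoc] using sum_primes_log_div_sub_one_le n
  refine ⟨C, fun n hn => (le_of_eq ?_).trans (hC n hn)⟩
  rw [sum_filter]
  refine sum_congr rfl fun k _ => ?_
  split_ifs with hk
  · have : 0 < log k := log_pos (by exact_mod_cast hk.one_lt)
    field_simp
  · simp

theorem natCast_le_totient_mul_exp_sum (n : ℕ) :
    (n : ℝ) ≤ φ n * exp (∑ p ∈ n.primeFactors, 1 / ((p : ℝ) - 1)) := by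
  have hφ : (φ n : ℝ) = n * ∏ p ∈ n.primeFactors, (1 - (p : ℝ)⁻¹) := by
    have h := congrArg (Rat.cast : ℚ → ℝ) (Nat.totient_eq_mul_prod_factors n)
    push_cast at h
    exact h
  have hinv : ∀ p ∈ n.primeFactors, (1 - (p : ℝ)⁻¹) * (1 + 1 / ((p : ℝ) - 1)) = 1 := by
    intro p hp
    have hp : (2 : ℝ) ≤ p := by exact_mod_cast (Nat.prime_of_mem_primeFactors hp).two_le
    field_simp [show (p : ℝ) - 1 ≠ 0 by linarith]
    ring
  calc (n : ℝ) = n * ∏ p ∈ n.primeFactors, ((1 - (p : ℝ)⁻¹) * (1 + 1 / ((p : ℝ) - 1))) := by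
        rw [prod_eq_one hinv, mul_one]
    _ = φ n * ∏ p ∈ n.primeFactors, (1 + 1 / ((p : ℝ) - 1)) := by
        rw [prod_mul_distrib, hφ, mul_assoc]
    _ ≤ φ n * ∏ p ∈ n.primeFactors, exp (1 / ((p : ℝ) - 1)) := by
        refine mul_le_mul_of_nonneg_left (prod_le_prod (fun p hp => ?_) fun p _ => ?_)
          (Nat.cast_nonneg _)
        · have hp : (2 : ℝ) ≤ p := by exact_mod_cast (Nat.prime_of_mem_primeFactors hp).two_le
          have : 0 ≤ 1 / ((p : ℝ) - 1) := one_div_nonneg.2 (by linarith)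
          linarith
        · rw [add_comm]; exact add_one_le_exp _
    _ = _ := by rw [exp_sum]

theorem pow_card_filter_lt_primeFactors_le_totient {b : ℕ} (hb : b ≠ 0) (m : ℕ) :
    m ^ #{p ∈ b.primeFactors | m < p} ≤ φ b := by
  calc m ^ #{p ∈ b.primeFactors | m < p}
      ≤ ∏ p ∈ b.primeFactors with m < p, (p - 1) :=
        pow_card_le_prod _ _ _ fun p hp => by have := (mem_filter.1 hp).2; omega
    _ ≤ ∏ p ∈ b.primeFactors, (p - 1) :=
        prod_le_prod_of_subset_of_one_le' (filter_subset _ _) fun p hp _ => by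
          have := (Nat.prime_of_mem_primeFactors hp).two_le; omega
    _ ≤ φ b := Nat.le_of_dvd (Nat.totient_pos.2 (Nat.pos_of_ne_zero hb))
        (Dvd.intro_left _ (Nat.totient_eq_div_primeFactors_mul b).symm)

theorem sum_primeFactors_gt_inv_sub_one_le {b m : ℕ} (hb : b ≠ 0) (hm : 2 ≤ m) :
    ∑ p ∈ b.primeFactors with m < p, 1 / ((p : ℝ) - 1) ≤ log (φ b) / (m * log m) := by
  have hm' : (2 : ℝ) ≤ m := by exact_mod_cast hm
  have hlogm : 0 < log m := log_pos (by linarith)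
  have hcard : #{p ∈ b.primeFactors | m < p} * log m ≤ log (φ b) := by
    rw [← log_pow]
    exact log_le_log (pow_pos (by linarith) _)
      (by exact_mod_cast pow_card_filter_lt_primeFactors_le_totient hb m)
  calc ∑ p ∈ b.primeFactors with m < p, 1 / ((p : ℝ) - 1)
      ≤ ∑ p ∈ b.primeFactors with m < p, 1 / (m : ℝ) := by
        gcongr with p hp
        have : (m : ℝ) + 1 ≤ p := by exact_mod_cast (mem_filter.1 hp).2
        linarith
    _ = #{p ∈ b.primeFactors | m < p} * log m / (m * log m) := by
        rw [sum_const, nsmul_eq_mul]; field_simp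
    _ ≤ log (φ b) / (m * log m) := by gcongr

theorem exists_natCast_le_mul_totient_mul_log_log :
    ∃ C > 0, ∀ᶠ B in atTop, ∀ b : ℕ, (φ b : ℝ) ≤ B → (b : ℝ) ≤ C * φ b * log (log B) := by
  obtain ⟨C, hC⟩ := exists_sum_primes_inv_sub_one_le
  refine ⟨exp (C + 2 / log 2), exp_pos _, ?_⟩
  filter_upwards [eventually_ge_atTop (exp 2)] with B hB b hbB
  rcases eq_or_ne b 0 with rfl | hb
  · simp
  have hlogB : 2 ≤ log B := by rwa [le_log_iff_exp_le ((exp_pos 2).trans_le hB)]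
  set m := ⌊log B⌋₊
  have hm : 2 ≤ m := Nat.le_floor (by exact_mod_cast hlogB)
  have hm' : (2 : ℝ) ≤ m := by exact_mod_cast hm
  have hmB : (m : ℝ) ≤ log B := Nat.floor_le (by linarith)
  have hlogm : 0 < log m := log_pos (by linarith)
  have hsmall : ∑ p ∈ b.primeFactors with p ≤ m, 1 / ((p : ℝ) - 1) ≤ log (log (log B)) + C :=
    calc _ ≤ ∑ p ∈ Ioc 0 m with p.Prime, 1 / ((p : ℝ) - 1) := by
          refine sum_le_sum_of_subset_of_nonneg (fun p hp => ?_) fun p hp _ => ?_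
          · obtain ⟨hp, hpm⟩ := mem_filter.1 hp
            have := Nat.prime_of_mem_primeFactors hp
            exact mem_filter.2 ⟨mem_Ioc.2 ⟨this.pos, hpm⟩, this⟩
          · have : (2 : ℝ) ≤ p := by exact_mod_cast (mem_filter.1 hp).2.two_le
            exact one_div_nonneg.2 (by linarith)
      _ ≤ log (log m) + C := hC m hm
      _ ≤ log (log (log B)) + C := by gcongr
  have hlarge : ∑ p ∈ b.primeFactors with ¬p ≤ m, 1 / ((p : ℝ) - 1) ≤ 2 / log 2 :=
    calc _ ≤ log (φ b) / (m * log m) := by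
          simpa only [not_le] using sum_primeFactors_gt_inv_sub_one_le hb hm
      _ ≤ (2 * m) / (m * log m) := by
          gcongr
          calc log (φ b) ≤ log B :=
                log_le_log (by exact_mod_cast Nat.totient_pos.2 (Nat.pos_of_ne_zero hb)) hbB
            _ ≤ 2 * m := by linarith [Nat.lt_floor_add_one (log B)]
      _ = 2 / log m := by field_simp
      _ ≤ 2 / log 2 := by gcongr
  have hloglogB : 0 < log (log B) := log_pos (by linarith)
  calc (b : ℝ) ≤ φ b * exp (∑ p ∈ b.primeFactors, 1 / ((p : ℝ) - 1)) :=
        natCast_le_totient_mul_exp_sum b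
    _ ≤ φ b * exp (log (log (log B)) + (C + 2 / log 2)) := by
        rw [← sum_filter_add_sum_filter_not _ (· ≤ m)]
        exact mul_le_mul_of_nonneg_left (exp_le_exp.2 (by linarith)) (Nat.cast_nonneg _)
    _ = exp (C + 2 / log 2) * φ b * log (log B) := by
        rw [exp_add, exp_log hloglogB]; ring

theorem sum_Ioc_sum_primeFactors_le {f : ℕ → ℝ} (hf : ∀ n, 0 ≤ f n)
    (hs : Summable fun n : ℕ => f n / n) (N : ℕ) :
    ∑ b ∈ Ioc 0 N, ∑ p ∈ b.primeFactors, f p ≤ N * ∑' n : ℕ, f n / n := by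
  let g : ArithmeticFunction ℝ :=
    ⟨fun n => if n.Prime then f n else 0, by simp [Nat.not_prime_zero]⟩
  have hg : ∀ b, (g * ζ) b = ∑ p ∈ b.primeFactors, f p := fun b => by
    rw [ArithmeticFunction.coe_mul_zeta_apply, Nat.primeFactors_eq_to_filter_divisors_prime,
      sum_filter]
    rfl
  calc ∑ b ∈ Ioc 0 N, ∑ p ∈ b.primeFactors, f p = ∑ n ∈ Ioc 0 N, g n * (N / n : ℕ) := by
        simp_rw [← hg]
        exact ArithmeticFunction.sum_Ioc_mul_zeta_eq_sum g N
    _ ≤ ∑ n ∈ Ioc 0 N, N * (f n / n) := by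
        refine sum_le_sum fun n _ => ?_
        have hgf : g n ≤ f n := by
          change (if n.Prime then f n else 0) ≤ f n
          split_ifs
          exacts [le_rfl, hf n]
        calc g n * (N / n : ℕ) ≤ f n * (N / n : ℝ) := by
              gcongr
              · exact hf n
              · exact Nat.cast_div_le
          _ = N * (f n / n) := by ring
    _ = N * ∑ n ∈ Ioc 0 N, f n / n := (mul_sum _ _ _).symm
    _ ≤ N * ∑' n : ℕ, f n / n := by
        gcongr
        exact hs.sum_le_tsum _ fun n _ => div_nonneg (hf n) (Nat.cast_nonneg n)

theorem finsum_psiSet_le {B K : ℝ} (hB : 0 ≤ B) (hK : 0 ≤ K)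
    (hKb : ∀ b : ℕ, (φ b : ℝ) ≤ B → (b : ℝ) ≤ K * φ b) :
    ∑ᶠ b ∈ PsiSet B, (φ b : ℝ) * ∑ p ∈ b.primeFactors, log p / ((p : ℝ) - 1) ≤
      K * B ^ 2 * ∑' n : ℕ, log n / (n - 1) / n := by
  set N := ⌊K * B⌋₊
  have hset : PsiSet B = ↑{b ∈ Ioc 0 N | (φ b : ℝ) ≤ B} := by
    ext b
    rw [coe_filter]
    exact ⟨fun ⟨hb, hbB⟩ => ⟨mem_Ioc.2 ⟨hb, Nat.le_floor ((hKb b hbB).trans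
      (mul_le_mul_of_nonneg_left hbB hK))⟩, hbB⟩, fun ⟨hb, hbB⟩ => ⟨(mem_Ioc.1 hb).1, hbB⟩⟩
  have hW : ∀ b : ℕ, 0 ≤ ∑ p ∈ b.primeFactors, log p / ((p : ℝ) - 1) :=
    fun b => sum_nonneg fun p _ => log_div_sub_one_nonneg p
  rw [hset, finsum_mem_coe_finset]
  calc ∑ b ∈ Ioc 0 N with (φ b : ℝ) ≤ B, (φ b : ℝ) * ∑ p ∈ b.primeFactors, log p / ((p : ℝ) - 1)
      ≤ ∑ b ∈ Ioc 0 N, B * ∑ p ∈ b.primeFactors, log p / ((p : ℝ) - 1) := by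
        refine (sum_le_sum fun b hb => ?_).trans
          (sum_le_sum_of_subset_of_nonneg (filter_subset _ _) fun b _ _ => mul_nonneg hB (hW b))
        exact mul_le_mul_of_nonneg_right (mem_filter.1 hb).2 (hW b)
    _ = B * ∑ b ∈ Ioc 0 N, ∑ p ∈ b.primeFactors, log p / ((p : ℝ) - 1) := (mul_sum _ _ _).symm
    _ ≤ B * (N * ∑' n : ℕ, log n / (n - 1) / n) := by
        gcongr
        exact sum_Ioc_sum_primeFactors_le log_div_sub_one_nonneg summable_log_div_sub_one_div N
    _ ≤ B * (K * B * ∑' n : ℕ, log n / (n - 1) / n) := by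
        gcongr
        · exact tsum_nonneg fun n => div_nonneg (log_div_sub_one_nonneg n) n.cast_nonneg
        · exact Nat.floor_le (by positivity)
    _ = K * B ^ 2 * ∑' n : ℕ, log n / (n - 1) / n := by ring

/-- For every fixed positive rational `r` there exists `B₀` such that for all `B ≥ B₀`,
the minor arithmetic factor satisfies `A₂(B) ≤ exp(10(2r+1)B²(log log B)²)`, i.e.
`(2r+1)·∑_{b : φ(b) ≤ B} φ(b)·∑_{p | b} (log p)/(p−1) ≤ 10(2r+1)B²(log log B)²`. -/
theorem log_A2_bound (r : ℚ) (hr : 0 < r) :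
    ∃ B₀ : ℝ, ∀ B : ℝ, B₀ ≤ B →
      (2 * (r : ℝ) + 1) *
          ∑ᶠ b ∈ PsiSet B, (Nat.totient b : ℝ) *
            ∑ p ∈ b.primeFactors, Real.log p / ((p : ℝ) - 1) ≤
        10 * (2 * (r : ℝ) + 1) * B ^ 2 * Real.log (Real.log B) ^ 2 := by
  obtain ⟨C, hC, hbound⟩ := exists_natCast_le_mul_totient_mul_log_log
  set T := ∑' n : ℕ, log n / (n - 1) / n
  have hT : 0 ≤ T := tsum_nonneg fun n => div_nonneg (log_div_sub_one_nonneg n) n.cast_nonneg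
  have hloglog : Tendsto (fun B => log (log B)) atTop atTop :=
    tendsto_log_atTop.comp tendsto_log_atTop
  obtain ⟨B₀, hB₀⟩ := eventually_atTop.1 <| hbound.and <|
    (eventually_ge_atTop 0).and (hloglog.eventually_ge_atTop (C * T / 10))
  refine ⟨B₀, fun B hB => ?_⟩
  obtain ⟨hbB, hB, hL⟩ := hB₀ B hB
  have hL0 : 0 ≤ log (log B) := le_trans (by positivity) hL
  have hr0 : (0 : ℝ) < r := by exact_mod_cast hr
  calc (2 * (r : ℝ) + 1) * ∑ᶠ b ∈ PsiSet B, (φ b : ℝ) * ∑ p ∈ b.primeFactors, log p / ((p : ℝ) - 1)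
      ≤ (2 * r + 1) * (C * log (log B) * B ^ 2 * T) := by
        gcongr
        exact finsum_psiSet_le hB (by positivity) fun b hb => (hbB b hb).trans_eq (by ring)
    _ = (2 * r + 1) * B ^ 2 * log (log B) * (C * T) := by ring
    _ ≤ (2 * r + 1) * B ^ 2 * log (log B) * (10 * log (log B)) :=
        mul_le_mul_of_nonneg_left (by linarith) (by positivity)
    _ = 10 * (2 * r + 1) * B ^ 2 * log (log B) ^ 2 := by ring
end

section
/- For every fraction a/b ∈ 𝓕_B (in lowest terms) and all integers ℓ ≥ 0 and k ≥ 0, the number d_nˡ · [tˡ](F̃_{b,a}(t−k)) is an integer, where [tˡ] denotes the coefficient of tˡ in a polynomial and d_n = lcm(1, 2, …, n). -/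
open Finset Polynomial

/-- `P_{B,den(r)} = 2·den(r)·LCM{p−1 : p prime, p ∣ b for some b ∈ Ψ}`. -/
def Pconst (Psi : Finset ℕ) (r : ℚ) : ℕ :=
  2 * r.den * (Psi.biUnion Nat.primeFactors).lcm (fun p => p - 1)

/-- `d_n = lcm(1, 2, …, n)`. -/
def dlcm (n : ℕ) : ℕ := (Finset.Icc 1 n).lcm id

/-- The polynomial `F_{b,a}(t) = ((∏_{p ∣ b} p^{(2r+1)n/(p−1)}) / ((n/den(r))!)^{den(r)(2r+1)})
· ∏_{j=0}^{(2r+1)n−1} (b·t − b·r·n + a + b·j)`.  Here, assuming `P_{B,den(r)} ∣ n`, the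
quantities `(2r+1)n = 2·num(r)·(n/den(r)) + n`, `n/den(r)`, `(2r+1)n/(p−1)` and
`den(r)(2r+1) = 2·num(r) + den(r)` are the indicated natural numbers (all the divisions
are exact). -/
noncomputable def Fpoly (r : ℚ) (n : ℕ) (b a : ℕ) : Polynomial ℚ :=
  Polynomial.C
      ((∏ p ∈ b.primeFactors, (p : ℚ) ^ ((2 * (r.num.toNat * (n / r.den)) + n) / (p - 1))) /
        (((n / r.den).factorial : ℚ)) ^ (2 * r.num.toNat + r.den)) *
    ∏ j ∈ Finset.range (2 * (r.num.toNat * (n / r.den)) + n),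
      (Polynomial.C (b : ℚ) * Polynomial.X +
        Polynomial.C ((a : ℚ) - (b : ℚ) * (r * n) + (b : ℚ) * j))

/-- `F̃_{b,a} = F_{b,a}` if `a/b ≠ 1`, and `F̃_{1,1}(t) = (t − rn)·F_{1,1}(t)`. -/
noncomputable def Ftilde (r : ℚ) (n : ℕ) (b a : ℕ) : Polynomial ℚ :=
  if (a : ℚ) / b = 1 then (Polynomial.X - Polynomial.C (r * n)) * Fpoly r n b a
  else Fpoly r n b a

open scoped Nat

/-! Write `m = n / den r` and `K = 2 num r + den r`, so that `(2r+1)n = Km`. After the shift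
`t ↦ t - k`, `m!^K F_{b,a}(t - k)` is the integer polynomial `C ∏_{j<Km} (bt + c + bj)` with
`C = ∏_{p ∣ b} p^{Km/(p-1)}`, and its `t^ℓ`-coefficient is `C b^ℓ` times a sum of products of
`Km - ℓ` terms of the progression `c + bj`. So it suffices that `m!^K` divides `d_n^ℓ C` times
each such product, prime by prime. For `p ∣ b`, Legendre's formula gives
`v_p(m!) ≤ m/(p-1)`, which `C` absorbs. For `p ∤ b`, each `p^s ≤ m` divides at least
`K ⌊m/p^s⌋` of any `Km` consecutive terms, of which at most `ℓ` are missing; summed over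
`s ≤ log_p m` the loss `ℓ log_p m` is paid for by `v_p(d_n^ℓ)`. The extra factor `t - rn` of
`F̃_{1,1}` has integer coefficients, and multiplying by such a polynomial preserves the
divisibility of all `d_n^ℓ [t^ℓ]`. -/

lemma div_le_card_filter_dvd_add_mul {q : ℕ} (hq : 0 < q) {b : ℤ} (hb : IsCoprime b q) (c : ℤ)
    (N : ℕ) : N / q ≤ #{j ∈ range N | (q : ℤ) ∣ c + b * (j : ℕ)} := by
  obtain ⟨u, w, huw⟩ := hb
  set v : ℕ := ((-c * u) % q).toNat
  have hv : c + b * v ≡ 0 [ZMOD q] := by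
    have hvu : (v : ℤ) ≡ -c * u [ZMOD q] := by
      rw [Int.toNat_of_nonneg (Int.emod_nonneg _ (by omega))]
      exact Int.mod_modEq _ _
    refine ((hvu.mul_left b).add_left c).trans (Int.modEq_zero_iff_dvd.mpr ⟨c * w, ?_⟩)
    linear_combination (-c) * huw
  calc N / q ≤ N.count (· ≡ v [MOD q]) := by
        rw [Nat.count_modEq_card _ hq]; exact Nat.le_add_right _ _
    _ = #{j ∈ range N | j ≡ v [MOD q]} := Nat.count_eq_card_filter_range _ _
    _ ≤ _ := card_le_card <| monotone_filter_right _ fun j _ hj ↦ Int.modEq_zero_iff_dvd.mp <|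
          (((Int.natCast_modEq_iff.mpr hj).mul_left b).add_left c).trans hv

lemma sum_card_filter_pow_dvd_le_factorization {ι : Type*} {p : ℕ} (hp : p.Prime) {T : Finset ι}
    {x : ι → ℤ} (hx : ∀ j ∈ T, x j ≠ 0) (S : ℕ) :
    ∑ s ∈ Ico 1 S, #{j ∈ T | (p : ℤ) ^ s ∣ x j} ≤ (∏ j ∈ T, x j).natAbs.factorization p := by
  rw [← Int.natAbsHom_apply, map_prod]
  simp only [Int.natAbsHom_apply]
  rw [Nat.factorization_prod fun j hj => Int.natAbs_ne_zero.mpr (hx j hj),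
    Finsupp.finsetSum_apply]
  simp only [card_filter]
  rw [sum_comm]
  refine sum_le_sum fun j hj => ?_
  rw [← card_filter]
  calc _ ≤ #(Icc 1 ((x j).natAbs.factorization p)) := card_le_card fun s hs => by
        simp only [mem_filter, mem_Ico, mem_Icc] at hs ⊢
        refine ⟨hs.1.1, (hp.pow_dvd_iff_le_factorization (Int.natAbs_ne_zero.mpr (hx j hj))).mp ?_⟩
        exact_mod_cast Int.natCast_dvd.mp (by exact_mod_cast hs.2)
    _ = _ := by simp

lemma factorization_factorial_le_div_sub_one {p : ℕ} (hp : p.Prime) (m : ℕ) :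
    (m !).factorization p ≤ m / (p - 1) :=
  (Nat.le_div_iff_mul_le (Nat.sub_pos_of_lt hp.one_lt)).mpr <| by
    rw [mul_comm, Nat.sub_one_mul_factorization_factorial hp]; exact Nat.sub_le _ _

lemma dlcm_ne_zero (n : ℕ) : dlcm n ≠ 0 := by
  simp [dlcm, Finset.lcm_eq_zero_iff]

lemma log_le_factorization_dlcm {p m n : ℕ} (hp : p.Prime) (hmn : m ≤ n) :
    Nat.log p m ≤ (dlcm n).factorization p := by
  rcases Nat.eq_zero_or_pos m with rfl | hm
  · simp
  rw [← hp.pow_dvd_iff_le_factorization (dlcm_ne_zero n)]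
  exact Finset.dvd_lcm <| mem_Icc.mpr
    ⟨Nat.one_le_pow _ _ hp.pos, (Nat.pow_log_le_self p hm.ne').trans hmn⟩

lemma mul_factorization_factorial_le_of_not_dvd {p b : ℕ} (hp : p.Prime) (hpb : ¬p ∣ b) (c : ℤ)
    {K m ℓ : ℕ} {T : Finset ℕ} (hT : T ⊆ range (K * m)) (hcard : K * m ≤ #T + ℓ)
    (hT0 : ∀ j ∈ T, c + b * j ≠ 0) :
    K * (m !).factorization p ≤
      (∏ j ∈ T, (c + b * j)).natAbs.factorization p + ℓ * Nat.log p m := by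
  set S := Nat.log p m
  have hlevel : ∀ s ∈ Ico 1 (S + 1),
      K * (m / p ^ s) ≤ #{j ∈ T | (p : ℤ) ^ s ∣ c + b * (j : ℕ)} + ℓ := by
    intro s _
    have hcop : IsCoprime (b : ℤ) ((p ^ s : ℕ) : ℤ) := Nat.isCoprime_iff_coprime.mpr <|
      (Nat.Coprime.pow_left s ((hp.coprime_iff_not_dvd).mpr hpb)).symm
    have hsplit : {j ∈ range (K * m) | ((p ^ s : ℕ) : ℤ) ∣ c + b * (j : ℕ)} ⊆
        {j ∈ T | (p : ℤ) ^ s ∣ c + b * (j : ℕ)} ∪ (range (K * m) \ T) := fun j hj => by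
      by_cases hjT : j ∈ T <;> simp_all
    calc K * (m / p ^ s) ≤ K * m / p ^ s := Nat.mul_div_le_mul_div_assoc _ _ _
      _ ≤ #{j ∈ range (K * m) | ((p ^ s : ℕ) : ℤ) ∣ c + b * (j : ℕ)} :=
        div_le_card_filter_dvd_add_mul (pow_pos hp.pos s) hcop c _
      _ ≤ #{j ∈ T | (p : ℤ) ^ s ∣ c + b * (j : ℕ)} + #(range (K * m) \ T) :=
        (card_le_card hsplit).trans (card_union_le _ _)
      _ ≤ _ := by rw [card_sdiff_of_subset hT, card_range]; omega
  calc K * (m !).factorization p = ∑ s ∈ Ico 1 (S + 1), K * (m / p ^ s) := by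
        rw [Nat.factorization_factorial hp (Nat.lt_succ_self _), mul_sum]
    _ ≤ ∑ s ∈ Ico 1 (S + 1), (#{j ∈ T | (p : ℤ) ^ s ∣ c + b * (j : ℕ)} + ℓ) := sum_le_sum hlevel
    _ = ∑ s ∈ Ico 1 (S + 1), #{j ∈ T | (p : ℤ) ^ s ∣ c + b * (j : ℕ)} + ℓ * S := by
        rw [sum_add_distrib, sum_const, Nat.card_Ico, smul_eq_mul, Nat.add_sub_cancel, mul_comm]
    _ ≤ _ := by
        gcongr
        exact sum_card_filter_pow_dvd_le_factorization hp hT0 _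

lemma factorial_pow_dvd_dlcm_pow_mul_prod {m n K ℓ b : ℕ} (hmn : m ≤ n) (hb : b ≠ 0)
    (hpm : ∀ p ∈ b.primeFactors, p - 1 ∣ m) (c : ℤ) {T : Finset ℕ} (hT : T ⊆ range (K * m))
    (hcard : K * m ≤ #T + ℓ) :
    (m ! : ℤ) ^ K ∣
      (dlcm n : ℤ) ^ ℓ * (∏ p ∈ b.primeFactors, p ^ (K * m / (p - 1)) : ℕ) *
        ∏ j ∈ T, (c + b * j) := by
  set P := ∏ p ∈ b.primeFactors, p ^ (K * m / (p - 1))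
  set Y := ∏ j ∈ T, (c + b * j)
  rcases eq_or_ne Y 0 with hY | hY
  · simp [hY]
  have hT0 : ∀ j ∈ T, c + b * j ≠ 0 := fun j hj h => hY (prod_eq_zero hj h)
  have hP : P ≠ 0 := prod_ne_zero_iff.mpr fun p hp =>
    pow_ne_zero _ (Nat.prime_of_mem_primeFactors hp).ne_zero
  have hd : dlcm n ^ ℓ ≠ 0 := pow_ne_zero _ (dlcm_ne_zero n)
  rw [← Nat.cast_pow, Int.natCast_dvd, Int.natAbs_mul, Int.natAbs_mul, Int.natAbs_pow,
    Int.natAbs_natCast, Int.natAbs_natCast]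
  refine (Nat.factorization_prime_le_iff_dvd (by positivity)
    (mul_ne_zero (mul_ne_zero hd hP) (Int.natAbs_ne_zero.mpr hY))).mp fun p hp => ?_
  rw [Nat.factorization_pow, Nat.factorization_mul (mul_ne_zero hd hP) (Int.natAbs_ne_zero.mpr hY),
    Nat.factorization_mul hd hP, Nat.factorization_pow]
  simp only [Finsupp.coe_add, Finsupp.coe_smul, Pi.add_apply, Pi.smul_apply, smul_eq_mul]
  by_cases hpb : p ∣ b
  · have hpP : p ∈ b.primeFactors := Nat.mem_primeFactors.mpr ⟨hp, hpb, hb⟩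
    have hP_le : K * m / (p - 1) ≤ P.factorization p :=
      (hp.pow_dvd_iff_le_factorization hP).mp (dvd_prod_of_mem _ hpP)
    calc K * (m !).factorization p ≤ K * (m / (p - 1)) :=
          Nat.mul_le_mul_left K (factorization_factorial_le_div_sub_one hp m)
      _ = K * m / (p - 1) := (Nat.mul_div_assoc K (hpm p hpP)).symm
      _ ≤ _ := by omega
  · have hcount : K * (m !).factorization p ≤ Y.natAbs.factorization p + ℓ * Nat.log p m :=
      mul_factorization_factorial_le_of_not_dvd hp hpb c hT hcard hT0
    have hlog := Nat.mul_le_mul_left ℓ (log_le_factorization_dlcm hp hmn)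
    omega

lemma coeff_prod_C_mul_X_add_C {R ι : Type*} [CommSemiring R] (s : Finset ι) (b : R) (y : ι → R)
    {ℓ : ℕ} (hℓ : ℓ ≤ #s) :
    (∏ j ∈ s, (C b * X + C (y j))).coeff ℓ =
      (∑ T ∈ s.powersetCard (#s - ℓ), ∏ j ∈ T, y j) * b ^ ℓ := by
  have hcomp : ∏ j ∈ s, (C b * X + C (y j)) = (∏ j ∈ s, (X + C (y j))).comp (C b * X) := by
    simp [Polynomial.prod_comp]
  rw [hcomp, comp_C_mul_X_coeff, prod_X_add_C_coeff s y hℓ]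

lemma natDegree_prod_C_mul_X_add_C_le {R ι : Type*} [CommSemiring R] (s : Finset ι) (b : R)
    (y : ι → R) : (∏ j ∈ s, (C b * X + C (y j))).natDegree ≤ #s :=
  (natDegree_prod_le s _).trans <| (sum_le_sum fun _ _ => natDegree_linear_le).trans (by simp)

lemma dvd_pow_mul_coeff_mul {R : Type*} [CommSemiring R] {M d : R} {g : R[X]}
    (hg : ∀ ℓ, M ∣ d ^ ℓ * g.coeff ℓ) (f : R[X]) (ℓ : ℕ) : M ∣ d ^ ℓ * (f * g).coeff ℓ := by
  rw [coeff_mul, mul_sum]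
  refine dvd_sum fun x hx => ?_
  rw [← mem_antidiagonal.mp hx, pow_add, mul_mul_mul_comm]
  exact (hg x.2).mul_left _

noncomputable def Fnum (b N : ℕ) (c : ℤ) : ℤ[X] :=
  C ((∏ p ∈ b.primeFactors, p ^ (N / (p - 1)) : ℕ) : ℤ) *
    ∏ j ∈ range N, (C (b : ℤ) * X + C (c + b * j))

lemma factorial_pow_dvd_dlcm_pow_mul_coeff_Fnum {m n K b : ℕ} (hmn : m ≤ n) (hb : b ≠ 0)
    (hpm : ∀ p ∈ b.primeFactors, p - 1 ∣ m) (c : ℤ) (ℓ : ℕ) :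
    (m ! : ℤ) ^ K ∣ (dlcm n : ℤ) ^ ℓ * (Fnum b (K * m) c).coeff ℓ := by
  rw [Fnum, coeff_C_mul]
  rcases le_or_gt ℓ (K * m) with hℓ | hℓ
  · rw [coeff_prod_C_mul_X_add_C _ _ _ (by simpa using hℓ), card_range, sum_mul, mul_sum, mul_sum]
    refine dvd_sum fun T hT => ?_
    obtain ⟨hTsub, hTcard⟩ := mem_powersetCard.mp hT
    refine ((factorial_pow_dvd_dlcm_pow_mul_prod (ℓ := ℓ) hmn hb hpm c hTsub (by omega)).mul_right
      ((b : ℤ) ^ ℓ)).trans (dvd_of_eq ?_)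
    ring
  · rw [coeff_eq_zero_of_natDegree_lt ((natDegree_prod_C_mul_X_add_C_le _ _ _).trans_lt
      (by simpa using hℓ))]
    simp

lemma Fpoly_comp_X_sub_C {r : ℚ} {n R : ℕ} (hR : r * n = R) (b a k : ℕ) :
    (Fpoly r n b a).comp (X - C (k : ℚ)) =
      C (((n / r.den)! : ℚ) ^ (2 * r.num.toNat + r.den))⁻¹ *
        (Fnum b (2 * (r.num.toNat * (n / r.den)) + n) (a - b * (R + k))).map
          (Int.castRingHom ℚ) := by
  have hfactor : ∀ j : ℕ, (C (b : ℚ) * X + C (a - b * R + b * j : ℚ)).comp (X - C (k : ℚ)) =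
      (C (b : ℤ) * X + C (a - b * (R + k) + b * j : ℤ)).map (Int.castRingHom ℚ) := fun j => by
    simp only [map_natCast, map_add, map_sub, map_mul, add_comp, mul_comp, natCast_comp, X_comp,
      sub_comp, Polynomial.map_add, Polynomial.map_mul, Polynomial.map_natCast, map_X,
      Polynomial.map_sub]
    ring
  rw [Fpoly, Fnum, hR, div_eq_inv_mul, C_mul, mul_assoc]
  simp only [mul_comp, C_comp, Polynomial.prod_comp, hfactor, Polynomial.map_mul, Polynomial.map_C,
    Polynomial.map_prod]
  simp

lemma Ftilde_comp_X_sub_C {r : ℚ} {n R : ℕ} (hR : r * n = R) (b a k : ℕ) :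
    ∃ f : ℤ[X], (Ftilde r n b a).comp (X - C (k : ℚ)) =
      C (((n / r.den)! : ℚ) ^ (2 * r.num.toNat + r.den))⁻¹ *
        (f * Fnum b (2 * (r.num.toNat * (n / r.den)) + n) (a - b * (R + k))).map
          (Int.castRingHom ℚ) := by
  unfold Ftilde
  split_ifs
  · refine ⟨X - C ((R : ℤ) + k), ?_⟩
    rw [mul_comp, Fpoly_comp_X_sub_C hR, Polynomial.map_mul, mul_left_comm, hR]
    congr 2
    simp only [map_natCast, sub_comp, X_comp, natCast_comp, eq_intCast, Int.cast_add,
      Int.cast_natCast, Polynomial.map_sub, map_X, Polynomial.map_add, Polynomial.map_natCast]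
    ring
  · exact ⟨1, by rw [one_mul, Fpoly_comp_X_sub_C hR]⟩

lemma exists_intCast_eq_pow_mul_coeff {p : ℚ[X]} {g : ℤ[X]} {M : ℤ} (hM : M ≠ 0)
    (hp : p = C (M : ℚ)⁻¹ * g.map (Int.castRingHom ℚ)) {d : ℤ} {ℓ : ℕ}
    (hdvd : M ∣ d ^ ℓ * g.coeff ℓ) : ∃ z : ℤ, (d : ℚ) ^ ℓ * p.coeff ℓ = z := by
  obtain ⟨z, hz⟩ := hdvd
  refine ⟨z, ?_⟩
  rw [hp, coeff_C_mul, coeff_map, eq_intCast]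
  field_simp
  exact_mod_cast hz

lemma Rat.mul_natCast_eq_of_den_dvd {r : ℚ} (hr : 0 ≤ r) {n : ℕ} (h : r.den ∣ n) :
    r * n = (r.num.toNat * (n / r.den) : ℕ) := by
  obtain ⟨m, rfl⟩ := h
  rw [Nat.mul_div_cancel_left _ r.den_pos]
  have hnum : ((r.num.toNat : ℕ) : ℚ) = r.num := by
    exact_mod_cast Int.toNat_of_nonneg (Rat.num_nonneg.mpr hr)
  push_cast
  rw [hnum, ← mul_assoc, Rat.mul_den_eq_num]

lemma den_dvd_of_Pconst_dvd {Psi : Finset ℕ} {r : ℚ} {n : ℕ} (h : Pconst Psi r ∣ n) : r.den ∣ n :=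
  (dvd_mul_of_dvd_left (dvd_mul_left _ 2) _).trans h

lemma sub_one_dvd_of_Pconst_dvd {Psi : Finset ℕ} {r : ℚ} {n b p : ℕ} (h : Pconst Psi r ∣ n)
    (hb : b ∈ Psi) (hp : p ∈ b.primeFactors) : p - 1 ∣ n / r.den := by
  refine Nat.dvd_div_of_mul_dvd (Dvd.dvd.trans ?_ h)
  rw [Pconst, mul_comm 2, mul_assoc]
  exact mul_dvd_mul_left _ <| (Finset.dvd_lcm (mem_biUnion.mpr ⟨b, hb, hp⟩)).mul_left 2

theorem dlcm_pow_mul_coeff_Ftilde_isInt_general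
    (B : ℝ) (r : ℚ) (hr : 0 < r)
    (Psi : Finset ℕ) (hPsi : ∀ b : ℕ, b ∈ Psi ↔ 0 < b ∧ (Nat.totient b : ℝ) ≤ B)
    (n : ℕ) (hPn : Pconst Psi r ∣ n)
    (b a : ℕ) (hbPsi : b ∈ Psi)
    (ℓ k : ℕ) :
    ∃ z : ℤ, ((dlcm n : ℚ)) ^ ℓ *
        ((Ftilde r n b a).comp (Polynomial.X - Polynomial.C (k : ℚ))).coeff ℓ = z := by
  have hb : b ≠ 0 := ((hPsi b).mp hbPsi).1.ne'
  have hden := den_dvd_of_Pconst_dvd hPn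
  have hN : 2 * (r.num.toNat * (n / r.den)) + n = (2 * r.num.toNat + r.den) * (n / r.den) := by
    have hn : n = r.den * (n / r.den) := (Nat.mul_div_cancel' hden).symm
    generalize n / r.den = m at hn ⊢
    subst hn
    ring
  obtain ⟨f, hf⟩ := Ftilde_comp_X_sub_C (Rat.mul_natCast_eq_of_den_dvd hr.le hden) b a k
  rw [hN] at hf
  exact exists_intCast_eq_pow_mul_coeff (by positivity) (by exact_mod_cast hf) <|
    dvd_pow_mul_coeff_mul (factorial_pow_dvd_dlcm_pow_mul_coeff_Fnum (Nat.div_le_self n r.den) hb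
      (fun p hp => sub_one_dvd_of_Pconst_dvd hPn hbPsi hp) _) f ℓ

/-- For every fraction `a/b ∈ 𝓕_B` in lowest terms and all `ℓ, k ≥ 0`, the number
`d_nˡ · [tˡ](F̃_{b,a}(t−k))` is an integer. -/
theorem dlcm_pow_mul_coeff_Ftilde_isInt
    (B : ℝ) (hB : 0 < B) (r : ℚ) (hr : 0 < r)
    (Psi : Finset ℕ) (hPsi : ∀ b : ℕ, b ∈ Psi ↔ 0 < b ∧ (Nat.totient b : ℝ) ≤ B)
    (n : ℕ) (hn : 0 < n) (hPn : Pconst Psi r ∣ n)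
    (b a : ℕ) (hbPsi : b ∈ Psi) (ha1 : 1 ≤ a) (hab : a ≤ b) (hcop : Nat.Coprime a b)
    (ℓ k : ℕ) :
    ∃ z : ℤ, ((dlcm n : ℚ)) ^ ℓ *
        ((Ftilde r n b a).comp (Polynomial.X - Polynomial.C (k : ℚ))).coeff ℓ = z :=
  dlcm_pow_mul_coeff_Ftilde_isInt_general B r hr Psi hPsi n hPn b a hbPsi ℓ k
end

section
/- For every θ ∈ 𝓕_B, the series r_{n,θ} = ∑_{m=1}^{∞} R_n(m+θ) converges and satisfies r_{n,θ} = ρ_{0,θ} + ∑_{3 ≤ i ≤ s, i odd} ρ_i·ζ(i,θ), where ζ(i,θ) = ∑_{m=0}^{∞} 1/(m+θ)ⁱ is the Hurwitz zeta value; in particular the rational coefficients ρ_i do not depend on θ. -/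
open Finset Filter Real

noncomputable section

/-- The zero set `𝓕_B`: rationals `a/b` with `b ∈ Ψ`, `1 ≤ a ≤ b`, `gcd(a,b)=1`. -/
def zeroSet (Psi : Finset ℕ) : Finset ℚ :=
  Psi.biUnion fun b =>
    ((Finset.Icc 1 b).filter fun a => Nat.Coprime a b).image fun a : ℕ => (a : ℚ) / b

/-- The major arithmetic factor `A₁(B) = ∏_{b ∈ Ψ} b^{(2r+1)φ(b)}`. -/
def A1 (Psi : Finset ℕ) (r : ℚ) : ℝ :=
  ∏ b ∈ Psi, (b : ℝ) ^ ((2 * (r : ℝ) + 1) * (Nat.totient b : ℝ))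

/-- The minor arithmetic factor `A₂(B) = ∏_{b ∈ Ψ} ∏_{p ∣ b} p^{(2r+1)φ(b)/(p−1)}`. -/
def A2 (Psi : Finset ℕ) (r : ℚ) : ℝ :=
  ∏ b ∈ Psi, ∏ p ∈ b.primeFactors,
    (p : ℝ) ^ ((2 * (r : ℝ) + 1) * (Nat.totient b : ℝ) / ((p : ℝ) - 1))

/-- The auxiliary rational function
`R_n(t) = A₁ⁿA₂ⁿ · (n!^{s+1}/((n/den(r))!)^{den(r)(2r+1)|𝓕_B|}) · (t−rn)·
∏_{θ∈𝓕_B}∏_{j=0}^{(2r+1)n−1}(t−rn+j+θ) / ∏_{j=0}^{n}(t+j)^{s+1}`.  Here, assuming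
`P_{B,den(r)} ∣ n`, `(2r+1)n = 2·num(r)·(n/den(r)) + n` and `den(r)(2r+1) = 2·num(r)+den(r)`
are the indicated natural numbers (the divisions are exact). -/
def Rfun (Psi : Finset ℕ) (r : ℚ) (s n : ℕ) (t : ℝ) : ℝ :=
  A1 Psi r ^ n * A2 Psi r ^ n *
    ((n.factorial : ℝ) ^ (s + 1) /
      (((n / r.den).factorial : ℝ)) ^ ((2 * r.num.toNat + r.den) * (zeroSet Psi).card)) *
    ((t - (r : ℝ) * n) *
      ∏ θ ∈ zeroSet Psi, ∏ j ∈ Finset.range (2 * (r.num.toNat * (n / r.den)) + n),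
        (t - (r : ℝ) * n + (j : ℝ) + (θ : ℝ))) /
    ∏ j ∈ Finset.range (n + 1), (t + (j : ℝ)) ^ (s + 1)


/-- The Hurwitz zeta value `ζ(i,α) = ∑_{m=0}^{∞} 1/(m+α)ⁱ`. -/
def hurwitzZetaValue (i : ℕ) (α : ℝ) : ℝ := ∑' m : ℕ, 1 / ((m : ℝ) + α) ^ i

/-!
Write `ρ_i = ∑_k a_{i,k}`. Through the partial fraction expansion, `∑_m R_n(m + 1 + θ)` becomes
`∑_{i,k} a_{i,k} ∑_m (m + k + 1 + θ)⁻ⁱ`. For `i ≥ 2` each inner series is a tail of `ζ(i, θ)`; for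
`i = 1` only the combination over `k` converges, and it telescopes because `ρ₁ = 0`, which is the
limit of `t R_n(t)` as `t → ∞` and vanishes since `deg R_n ≤ -2`. The even `ρ_i` vanish because
`R_n(-n - t) = -R_n(t)` (as `θ ↦ 1 - θ` permutes `𝓕_B \ {1}`, the roots of the numerator are
symmetric about `-n/2`): by uniqueness of partial fractions `a_{i,n-k} = (-1)^{i+1} a_{i,k}`.
-/

open Topology

def partialFractionSum (s n : ℕ) (c : ℕ → ℕ → ℝ) (t : ℝ) : ℝ :=
  ∑ i ∈ Icc 1 s, ∑ k ∈ range (n + 1), c i k / (t + k) ^ i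

lemma eventually_forall_add_ne_zero (n k₀ : ℕ) :
    ∀ᶠ t in 𝓝[≠] (-k₀ : ℝ), ∀ k ∈ range (n + 1), t + (k : ℝ) ≠ 0 := by
  refine (eventually_all_finset _).2 fun k _ => ?_
  by_cases hk : k = k₀
  · subst hk
    filter_upwards [self_mem_nhdsWithin] with t (ht : t ≠ -k)
    contrapose! ht; linarith
  · have : (-k₀ + k : ℝ) ≠ 0 := by
      rw [neg_add_eq_sub, sub_ne_zero]; exact_mod_cast hk
    exact nhdsWithin_le_nhds ((continuous_id.add continuous_const).continuousAt.eventually_ne this)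

lemma tendsto_one_div_add_pow_atTop (a : ℝ) {i : ℕ} (hi : i ≠ 0) :
    Tendsto (fun t : ℝ => 1 / (t + a) ^ i) atTop (𝓝 0) := by
  refine (tendsto_inv_atTop_zero.comp
    ((tendsto_pow_atTop hi).comp (tendsto_atTop_add_const_right _ a tendsto_id))).congr fun t => ?_
  simp

section ShiftedSums

variable {ι : Type*} {g : ℕ → ℝ}

lemma hasSum_sub_add_of_antitone (hg : Antitone g) (hg0 : Tendsto g atTop (𝓝 0)) (j : ℕ) :
    HasSum (fun m => g (m + j) - g m) (-∑ ℓ ∈ range j, g ℓ) := by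
  suffices h : HasSum (fun m => g m - g (m + j)) (∑ ℓ ∈ range j, g ℓ) by simpa using h.neg
  refine (hasSum_iff_tendsto_nat_of_nonneg (fun m => sub_nonneg.mpr (hg (by omega))) _).mpr ?_
  have hpartial : ∀ M, ∑ m ∈ range M, (g m - g (m + j)) =
      ∑ ℓ ∈ range j, g ℓ - ∑ ℓ ∈ range j, g (M + ℓ) := by
    intro M
    have h₁ := sum_range_add g M j
    have h₂ := sum_range_add g j M
    rw [add_comm j M] at h₂
    simp only [sum_sub_distrib, add_comm _ j]
    linarith
  simp only [hpartial]
  simpa using tendsto_const_nhds.sub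
    (tendsto_finsetSum (range j) fun ℓ _ => hg0.comp (tendsto_add_atTop_nat ℓ))

lemma hasSum_sum_mul_add_of_hasSum {A : ℝ} (hg : HasSum g A) (S : Finset ι) (w : ι → ℝ)
    (σ : ι → ℕ) :
    HasSum (fun m => ∑ k ∈ S, w k * g (m + σ k))
      (∑ k ∈ S, w k * (A - ∑ ℓ ∈ range (σ k), g ℓ)) :=
  hasSum_sum fun k _ => ((hasSum_nat_add_iff' (σ k)).mpr hg).mul_left (w k)

lemma hasSum_sum_mul_add_of_antitone (hg : Antitone g) (hg0 : Tendsto g atTop (𝓝 0))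
    (S : Finset ι) (w : ι → ℝ) (hw : ∑ k ∈ S, w k = 0) (σ : ι → ℕ) (A : ℝ) :
    HasSum (fun m => ∑ k ∈ S, w k * g (m + σ k))
      (∑ k ∈ S, w k * (A - ∑ ℓ ∈ range (σ k), g ℓ)) := by
  have hterms : ∀ m, ∑ k ∈ S, w k * g (m + σ k) = ∑ k ∈ S, w k * (g (m + σ k) - g m) := by
    intro m
    simp only [mul_sub, sum_sub_distrib, ← sum_mul, hw, zero_mul, sub_zero]
  have hvalue : ∑ k ∈ S, w k * (A - ∑ ℓ ∈ range (σ k), g ℓ) =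
      ∑ k ∈ S, w k * -∑ ℓ ∈ range (σ k), g ℓ := by
    simp only [sub_eq_add_neg, mul_add, sum_add_distrib, ← sum_mul, hw, zero_mul, zero_add]
  rw [funext hterms, hvalue]
  exact hasSum_sum fun k _ => (hasSum_sub_add_of_antitone hg hg0 (σ k)).mul_left (w k)

end ShiftedSums

lemma summable_one_div_nat_add_pow {θ : ℝ} (hθ : 0 ≤ θ) {i : ℕ} (hi : 2 ≤ i) :
    Summable fun m : ℕ => 1 / ((m : ℝ) + θ) ^ i :=
  ((Real.summable_one_div_nat_add_rpow θ i).mpr (by exact_mod_cast hi)).congr fun m => by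
    rw [abs_of_nonneg (by positivity), Real.rpow_natCast]

lemma hasSum_sum_div_nat_add_pow {θ : ℝ} (hθ : 0 < θ) {i : ℕ} (hi : 1 ≤ i) (N : ℕ)
    (w : ℕ → ℝ) (hw : i = 1 → ∑ k ∈ range N, w k = 0) :
    HasSum (fun m : ℕ => ∑ k ∈ range N, w k / ((m : ℝ) + 1 + θ + k) ^ i)
      (∑ k ∈ range N,
        w k * (hurwitzZetaValue i θ - ∑ ℓ ∈ range (k + 1), 1 / ((ℓ : ℝ) + θ) ^ i)) := by
  set g : ℕ → ℝ := fun ℓ => 1 / ((ℓ : ℝ) + θ) ^ i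
  have hterms : ∀ m : ℕ, ∑ k ∈ range N, w k / ((m : ℝ) + 1 + θ + k) ^ i =
      ∑ k ∈ range N, w k * g (m + (k + 1)) := fun m =>
    sum_congr rfl fun k _ => by simp only [g]; push_cast; ring_nf
  rw [funext hterms]
  rcases hi.lt_or_eq with hi2 | rfl
  · exact hasSum_sum_mul_add_of_hasSum (summable_one_div_nat_add_pow hθ.le hi2).hasSum _ _ _
  · -- `hurwitzZetaValue 1 θ` is a junk value here, multiplied by `∑ k, w k = 0`
    refine hasSum_sum_mul_add_of_antitone ?_ ?_ _ _ (hw rfl) _ _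
    · exact fun a b hab => one_div_le_one_div_of_le (by positivity) (by simpa [g])
    · simpa [g, Function.comp_def] using tendsto_inv_atTop_zero.comp
        (tendsto_atTop_add_const_right _ θ tendsto_natCast_atTop_atTop)

lemma sum_Icc_one_eq_sum_filter_odd {s : ℕ} {f : ℕ → ℝ} (h1 : f 1 = 0)
    (heven : ∀ i ∈ Icc 1 s, Even i → f i = 0) :
    ∑ i ∈ Icc 1 s, f i = ∑ i ∈ (Icc 3 s).filter Odd, f i := by
  refine (sum_subset (fun i hi => ?_) fun i hi hi' => ?_).symm
  · obtain ⟨⟨h3, hs⟩, -⟩ : (3 ≤ i ∧ i ≤ s) ∧ Odd i := by simpa using hi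
    exact mem_Icc.mpr ⟨by omega, hs⟩
  · rcases Nat.even_or_odd i with he | ⟨j, rfl⟩
    · exact heven _ hi he
    · obtain ⟨h1i, his⟩ := mem_Icc.mp hi
      rcases j with _ | j
      · exact h1
      · exact absurd (mem_filter.mpr ⟨mem_Icc.mpr ⟨by omega, his⟩, odd_two_mul_add_one _⟩) hi'

section PartialFractions

variable {s n : ℕ} {c : ℕ → ℕ → ℝ}

lemma tendsto_mul_pow_partialFractionSum {k₀ : ℕ} (hk₀ : k₀ ∈ range (n + 1)) (hs : 1 ≤ s) :
    Tendsto (fun t => (t + k₀) ^ s * partialFractionSum s n c t) (𝓝[≠] (-k₀ : ℝ))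
      (𝓝 (c s k₀)) := by
  have hterm : ∀ i ∈ Icc 1 s, ∀ k ∈ range (n + 1),
      Tendsto (fun t : ℝ => (t + k₀) ^ s * (c i k / (t + k) ^ i)) (𝓝[≠] (-k₀ : ℝ))
        (𝓝 (if i = s ∧ k = k₀ then c s k₀ else 0)) := by
    intro i hi k _
    have his : i ≤ s := (mem_Icc.mp hi).2
    by_cases hk : k = k₀
    · subst hk
      have hlim : Tendsto (fun t : ℝ => c i k * (t + k) ^ (s - i)) (𝓝[≠] (-k : ℝ))
          (𝓝 (c i k * (-k + k : ℝ) ^ (s - i))) :=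
        (Continuous.tendsto (by fun_prop) _).mono_left nhdsWithin_le_nhds
      have hval : c i k * (-k + k : ℝ) ^ (s - i) = if i = s ∧ k = k then c s k else 0 := by
        rcases eq_or_lt_of_le his with rfl | hlt
        · simp
        · simp [hlt.ne, Nat.sub_ne_zero_of_lt hlt]
      rw [← hval]
      refine hlim.congr' ?_
      filter_upwards [self_mem_nhdsWithin] with t (ht : t ≠ -k)
      have : t + k ≠ 0 := by contrapose! ht; linarith
      rw [pow_sub₀ _ this his]
      field_simp
    · have hlim : Tendsto (fun t : ℝ => (t + k₀) ^ s * (c i k / (t + k) ^ i)) (𝓝 (-k₀ : ℝ))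
          (𝓝 ((-k₀ + k₀ : ℝ) ^ s * (c i k / (-k₀ + k) ^ i))) := by
        have : (-k₀ + k : ℝ) ≠ 0 := by
          rw [neg_add_eq_sub, sub_ne_zero]; exact_mod_cast hk
        exact ((Continuous.tendsto (by fun_prop) _).mul
          (tendsto_const_nhds.div (Continuous.tendsto (by fun_prop) _) (pow_ne_zero i this)))
      simpa [hk, zero_pow (by omega : s ≠ 0)] using hlim.mono_left nhdsWithin_le_nhds
  simp only [partialFractionSum, mul_sum]
  convert tendsto_finsetSum _ fun i hi => tendsto_finsetSum _ (hterm i hi)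
  simp [ite_and, hk₀, hs]

lemma eq_zero_of_partialFractionSum_eq_zero
    (h : ∀ t : ℝ, (∀ k ∈ range (n + 1), t + k ≠ 0) → partialFractionSum s n c t = 0) :
    ∀ i ∈ Icc 1 s, ∀ k ∈ range (n + 1), c i k = 0 := by
  induction s with
  | zero => simp
  | succ s ih =>
    have htop : ∀ k ∈ range (n + 1), c (s + 1) k = 0 := fun k hk =>
      tendsto_nhds_unique (tendsto_mul_pow_partialFractionSum hk (Nat.le_add_left 1 s))
        (tendsto_const_nhds.congr' <| (eventually_forall_add_ne_zero n k).mono fun t ht => by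
          simp only [h t ht, mul_zero])
    have hlower : ∀ t, partialFractionSum (s + 1) n c t = partialFractionSum s n c t := by
      intro t
      rw [partialFractionSum, sum_Icc_succ_top (Nat.le_add_left 1 s),
        sum_eq_zero (s := range (n + 1)) fun k hk => by rw [htop k hk, zero_div], add_zero]
      rfl
    intro i hi
    rcases (mem_Icc.mp hi).2.lt_or_eq with hlt | rfl
    · exact ih (fun t ht => hlower t ▸ h t ht) i (mem_Icc.mpr ⟨(mem_Icc.mp hi).1, by omega⟩)
    · exact htop

lemma partialFractionSum_neg_sub (t : ℝ) :
    partialFractionSum s n c (-n - t) =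
      partialFractionSum s n (fun i k => (-1) ^ i * c i (n - k)) t := by
  refine sum_congr rfl fun i _ => ?_
  rw [← sum_range_reflect]
  refine sum_congr rfl fun k hk => ?_
  have hkn : k ≤ n := Nat.lt_succ_iff.mp (mem_range.mp hk)
  dsimp only
  rw [add_tsub_cancel_right, Nat.cast_sub hkn, show -(n : ℝ) - t + (n - k) = -(t + k) by ring]
  rcases Nat.even_or_odd i with he | ho
  · rw [he.neg_pow, he.neg_one_pow, one_mul]
  · rw [ho.neg_pow, ho.neg_one_pow, div_neg, neg_one_mul, neg_div]

lemma sum_coeff_eq_zero_of_antisymm {F : ℝ → ℝ}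
    (hF : ∀ t, (∀ k ∈ range (n + 1), t + (k : ℝ) ≠ 0) → F t = partialFractionSum s n c t)
    (hanti : ∀ t, F (-n - t) = -F t) {i : ℕ} (hi : i ∈ Icc 1 s) (heven : Even i) :
    ∑ k ∈ range (n + 1), c i k = 0 := by
  set d : ℕ → ℕ → ℝ := fun i k => c i k + (-1) ^ i * c i (n - k)
  have hd : ∀ t, (∀ k ∈ range (n + 1), t + (k : ℝ) ≠ 0) → partialFractionSum s n d t = 0 := by
    intro t ht
    have ht' : ∀ k ∈ range (n + 1), -n - t + (k : ℝ) ≠ 0 := by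
      intro k hk
      have := ht (n - k) (mem_range.mpr (by have := mem_range.mp hk; omega))
      rw [Nat.cast_sub (by have := mem_range.mp hk; omega)] at this
      contrapose! this
      linarith
    have : partialFractionSum s n d t =
        partialFractionSum s n c t + partialFractionSum s n c (-n - t) := by
      rw [partialFractionSum_neg_sub]
      simp only [partialFractionSum, d, add_div, sum_add_distrib]
    rw [this, ← hF t ht, ← hF _ ht', hanti, add_neg_cancel]
  have hsum := sum_eq_zero (eq_zero_of_partialFractionSum_eq_zero hd i hi)
  have hreflect : ∑ k ∈ range (n + 1), c i (n - k) = ∑ k ∈ range (n + 1), c i k := by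
    simpa using sum_range_reflect (c i) (n + 1)
  rw [sum_add_distrib, ← mul_sum, heven.neg_one_pow, one_mul, hreflect] at hsum
  linarith

lemma tendsto_mul_partialFractionSum_atTop (hs : 1 ≤ s) :
    Tendsto (fun t => t * partialFractionSum s n c t) atTop (𝓝 (∑ k ∈ range (n + 1), c 1 k)) := by
  have hterm : ∀ i ∈ Icc 1 s, ∀ k ∈ range (n + 1),
      Tendsto (fun t : ℝ => t * (c i k / (t + k) ^ i)) atTop
        (𝓝 (if i = 1 then c 1 k else 0)) := by
    intro i hi k _
    have hi0 : i ≠ 0 := by have := (mem_Icc.mp hi).1; omega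
    -- split the numerator as `t = (t + k) - k`
    have hlim : Tendsto
        (fun t : ℝ => c i k * (1 / (t + k) ^ (i - 1)) - k * c i k * (1 / (t + k) ^ i))
        atTop (𝓝 (if i = 1 then c 1 k else 0)) := by
      have htail := (tendsto_one_div_add_pow_atTop (k : ℝ) hi0).const_mul (k * c i k)
      rcases eq_or_ne i 1 with rfl | hi1
      · simpa using tendsto_const_nhds.sub htail
      · have hmain :=
          (tendsto_one_div_add_pow_atTop (k : ℝ) (by omega : i - 1 ≠ 0)).const_mul (c i k)
        simpa [hi1] using hmain.sub htail
    refine hlim.congr' ?_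
    filter_upwards [eventually_gt_atTop 0] with t ht
    have : t + k ≠ 0 := by positivity
    obtain ⟨j, rfl⟩ : ∃ j, i = j + 1 := ⟨i - 1, by omega⟩
    rw [Nat.add_sub_cancel, pow_succ]
    field_simp
    ring
  have hsum : ∑ i ∈ Icc 1 s, ∑ k ∈ range (n + 1), (if i = 1 then c 1 k else 0) =
      ∑ k ∈ range (n + 1), c 1 k := by
    rw [sum_comm]; simp [hs]
  simp only [partialFractionSum, mul_sum, ← hsum]
  exact tendsto_finsetSum _ fun i hi => tendsto_finsetSum _ (hterm i hi)

lemma sum_coeff_one_eq_zero_of_tendsto {F : ℝ → ℝ} (hs : 1 ≤ s)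
    (hF : ∀ t, (∀ k ∈ range (n + 1), t + (k : ℝ) ≠ 0) → F t = partialFractionSum s n c t)
    (hdecay : Tendsto (fun t => t * F t) atTop (𝓝 0)) :
    ∑ k ∈ range (n + 1), c 1 k = 0 :=
  tendsto_nhds_unique (tendsto_mul_partialFractionSum_atTop hs) <|
    hdecay.congr' <| (eventually_gt_atTop 0).mono fun t ht => by
      rw [hF t fun k _ => by positivity]

lemma hasSum_partialFractionSum_nat_add_one_add {θ : ℝ} (hθ : 0 < θ)
    (hρ : ∑ k ∈ range (n + 1), c 1 k = 0) :
    HasSum (fun m : ℕ => partialFractionSum s n c (m + 1 + θ))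
      (-∑ k ∈ range (n + 1), ∑ ℓ ∈ range (k + 1), ∑ i ∈ Icc 1 s, c i k / ((ℓ : ℝ) + θ) ^ i +
        ∑ i ∈ Icc 1 s, (∑ k ∈ range (n + 1), c i k) * hurwitzZetaValue i θ) := by
  have h := hasSum_sum fun i (hi : i ∈ Icc 1 s) =>
    hasSum_sum_div_nat_add_pow hθ (mem_Icc.mp hi).1 (n + 1) (c i) fun h => h ▸ hρ
  convert h using 1
  · rfl
  have hswap : ∑ i ∈ Icc 1 s, ∑ k ∈ range (n + 1), ∑ ℓ ∈ range (k + 1), c i k / ((ℓ : ℝ) + θ) ^ i =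
      ∑ k ∈ range (n + 1), ∑ ℓ ∈ range (k + 1), ∑ i ∈ Icc 1 s, c i k / ((ℓ : ℝ) + θ) ^ i := by
    rw [sum_comm]
    exact sum_congr rfl fun k _ => sum_comm
  simp only [mul_sub, sum_sub_distrib, ← sum_mul, mul_sum, mul_one_div, hswap]
  ring

end PartialFractions

lemma prod_range_neg_add_eq {M : ℕ} (hM : Even M) (x y : ℝ) :
    ∏ j ∈ range M, (-(x + M) + j + y) = ∏ j ∈ range M, (x + j + (1 - y)) := by
  calc ∏ j ∈ range M, (-(x + M) + j + y)
      = ∏ j ∈ range M, -(x + ↑(M - 1 - j) + (1 - y)) := by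
        refine prod_congr rfl fun j hj => ?_
        have hjM : j < M := mem_range.mp hj
        rw [Nat.cast_sub (by omega), Nat.cast_sub (by omega)]
        push_cast
        ring
    _ = ∏ j ∈ range M, (x + j + (1 - y)) := by
        rw [prod_neg, card_range, hM.neg_one_pow, one_mul,
          prod_range_reflect (fun j : ℕ => x + j + (1 - y))]

lemma add_mul_prod_range_add (M : ℕ) (x : ℝ) :
    (x + M) * ∏ j ∈ range M, (x + j) = x * ∏ j ∈ range M, (x + j + 1) := by
  have hsucc := prod_range_succ' (fun j : ℕ => x + j) M
  push_cast at hsucc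
  rw [mul_comm, ← prod_range_succ, hsucc]
  simp [add_assoc, mul_comm]

/-- The roots `0` and `-(j + θ)` of `x ↦ x * ∏ θ ∈ F, ∏ j < M, (x + j + θ)` are permuted by
`x ↦ -M - x`. -/
lemma mul_prod_prod_add_antisymm {F : Finset ℚ} (h1 : 1 ∈ F)
    (hinv : ∀ θ ∈ F.erase 1, 1 - θ ∈ F.erase 1) {M : ℕ} (hM : Even M) (u : ℝ) :
    -(u + M) * ∏ θ ∈ F, ∏ j ∈ range M, (-(u + M) + j + θ) =
      -(u * ∏ θ ∈ F, ∏ j ∈ range M, (u + j + θ)) := by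
  have hreflect : ∏ θ ∈ F.erase 1, ∏ j ∈ range M, (u + j + (1 - θ)) =
      ∏ θ ∈ F.erase 1, ∏ j ∈ range M, (u + j + θ) :=
    prod_nbij' (1 - ·) (1 - ·) hinv hinv (by simp) (by simp) fun θ _ =>
      prod_congr rfl fun j _ => by push_cast; ring
  simp only [prod_range_neg_add_eq hM]
  rw [← mul_prod_erase F _ h1, ← mul_prod_erase F _ h1, hreflect]
  have := add_mul_prod_range_add M u
  push_cast
  simp only [sub_self, add_zero]
  linear_combination -(∏ θ ∈ F.erase 1, ∏ j ∈ range M, (u + j + θ)) * this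

lemma prod_range_neg_sub_add_pow {e : ℕ} (he : Even e) (n : ℕ) (t : ℝ) :
    ∏ j ∈ range (n + 1), (-n - t + j) ^ e = ∏ j ∈ range (n + 1), (t + j) ^ e := by
  rw [← prod_range_reflect (fun j : ℕ => (t + j) ^ e)]
  refine prod_congr rfl fun j hj => ?_
  have hjn : j ≤ n := Nat.lt_succ_iff.mp (mem_range.mp hj)
  rw [add_tsub_cancel_right, Nat.cast_sub hjn, ← he.neg_pow]
  ring_nf

section ZeroSet

variable {Psi : Finset ℕ} {θ : ℚ}

lemma mem_zeroSet :
    θ ∈ zeroSet Psi ↔ ∃ b ∈ Psi, ∃ a, (1 ≤ a ∧ a ≤ b) ∧ a.Coprime b ∧ (a : ℚ) / b = θ := by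
  simp [zeroSet, and_assoc]

lemma pos_of_mem_zeroSet (hθ : θ ∈ zeroSet Psi) : 0 < θ := by
  obtain ⟨b, -, a, ⟨ha, hab⟩, -, rfl⟩ := mem_zeroSet.mp hθ
  have : 0 < b := by omega
  positivity

lemma one_mem_zeroSet (h : 1 ∈ Psi) : 1 ∈ zeroSet Psi :=
  mem_zeroSet.mpr ⟨1, h, 1, ⟨le_rfl, le_rfl⟩, Nat.coprime_one_left 1, by norm_num⟩

lemma one_sub_mem_zeroSet_erase_one (hθ : θ ∈ (zeroSet Psi).erase 1) :
    1 - θ ∈ (zeroSet Psi).erase 1 := by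
  obtain ⟨hθ1, hθF⟩ := mem_erase.mp hθ
  have hθ0 := pos_of_mem_zeroSet hθF
  obtain ⟨b, hb, a, ⟨ha, hab⟩, hcop, rfl⟩ := mem_zeroSet.mp hθF
  have hab' : a < b := by
    refine hab.lt_of_ne fun h => hθ1 ?_
    subst h
    have : (a : ℚ) ≠ 0 := by positivity
    field_simp
  refine mem_erase.mpr ⟨by linarith, mem_zeroSet.mpr
    ⟨b, hb, b - a, ⟨by omega, by omega⟩, (Nat.coprime_self_sub_left hab).mpr hcop, ?_⟩⟩
  have : (b : ℚ) ≠ 0 := Nat.cast_ne_zero.mpr (by omega)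
  rw [Nat.cast_sub hab'.le]
  field_simp

end ZeroSet

lemma cast_two_mul_num_mul_div_den_add {r : ℚ} (hr : 0 ≤ r) {n : ℕ} (hn : r.den ∣ n) :
    ((2 * (r.num.toNat * (n / r.den)) + n : ℕ) : ℝ) = (2 * r + 1) * n := by
  have hnum : ((r.num.toNat : ℤ) : ℝ) = r.num := by
    rw [Int.toNat_of_nonneg (Rat.num_nonneg.mpr hr)]
  have hden : (r.den : ℝ) ≠ 0 := Nat.cast_ne_zero.mpr r.den_nz
  push_cast [Nat.cast_div hn hden, Rat.cast_def]
  rw [← hnum]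
  field_simp
  push_cast
  ring

lemma Rfun_neg_sub {Psi : Finset ℕ} {r : ℚ} {s n : ℕ} (hr : 0 ≤ r) (hn : 2 * r.den ∣ n)
    (hs : Odd s) (h1 : 1 ∈ Psi) (t : ℝ) :
    Rfun Psi r s n (-n - t) = -Rfun Psi r s n t := by
  have hM := cast_two_mul_num_mul_div_den_add hr (dvd_of_mul_left_dvd hn)
  have hMeven : Even (2 * (r.num.toNat * (n / r.den)) + n) :=
    (even_two_mul _).add (even_iff_two_dvd.mpr (dvd_of_mul_right_dvd hn))
  have hu : -(n : ℝ) - t - r * n = -((t - r * n) + ↑(2 * (r.num.toNat * (n / r.den)) + n)) := by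
    rw [hM]; ring
  simp only [Rfun]
  rw [hu, mul_prod_prod_add_antisymm (one_mem_zeroSet h1) (fun _ => one_sub_mem_zeroSet_erase_one)
    hMeven, prod_range_neg_sub_add_pow hs.add_one]
  ring

open Polynomial in
lemma tendsto_mul_Rfun_atTop {Psi : Finset ℕ} {r : ℚ} {s n : ℕ}
    (hdeg : 2 + (2 * (r.num.toNat * (n / r.den)) + n) * #(zeroSet Psi) < (n + 1) * (s + 1)) :
    Tendsto (fun t => t * Rfun Psi r s n t) atTop (𝓝 0) := by
  set M := 2 * (r.num.toNat * (n / r.den)) + n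
  set κ : ℝ := A1 Psi r ^ n * A2 Psi r ^ n * ((n.factorial : ℝ) ^ (s + 1) /
    ((n / r.den).factorial : ℝ) ^ ((2 * r.num.toNat + r.den) * #(zeroSet Psi)))
  set N : ℝ[X] := ∏ θ ∈ zeroSet Psi, ∏ j ∈ range M, (X + C (-(r * n : ℝ) + j + θ))
  set P : ℝ[X] := X * ((X + C (-(r * n : ℝ))) * N)
  set Q : ℝ[X] := ∏ j ∈ range (n + 1), (X + C (j : ℝ)) ^ (s + 1)
  have heval : ∀ t, t * Rfun Psi r s n t = κ * (P.eval t / Q.eval t) := by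
    intro t
    have hfactor : ∀ (j : ℕ) (θ : ℚ), t + (-(r * n : ℝ) + j + θ) = t - r * n + j + θ :=
      fun _ _ => by ring
    simp only [Rfun, P, N, Q, eval_mul, eval_prod, eval_pow, eval_add, eval_X, eval_C, hfactor, κ]
    ring
  have hN : N.Monic :=
    monic_prod_of_monic _ _ fun θ _ => monic_prod_of_monic _ _ fun j _ => monic_X_add_C _
  have hP : P.natDegree = 2 + M * #(zeroSet Psi) := by
    rw [monic_X.natDegree_mul ((monic_X_add_C _).mul hN), (monic_X_add_C _).natDegree_mul hN,
      natDegree_prod_of_monic _ _ fun θ _ => monic_prod_of_monic _ _ fun j _ => monic_X_add_C _]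
    simp only [natDegree_prod_of_monic _ _ fun j _ => monic_X_add_C _, natDegree_X,
      natDegree_X_add_C, sum_const, card_range, smul_eq_mul, mul_one]
    ring
  have hQ : Q.natDegree = (n + 1) * (s + 1) := by
    rw [natDegree_prod_of_monic _ _ fun j _ => (monic_X_add_C _).pow _]
    simp only [natDegree_pow, natDegree_X_add_C, mul_one, sum_const, card_range, smul_eq_mul]
  have hlt : P.degree < Q.degree := degree_lt_degree (by rw [hP, hQ]; exact hdeg)
  simpa [heval] using (div_tendsto_atTop_zero_of_degree_lt P Q hlt).const_mul κ

lemma two_add_mul_lt_mul_of_le_sq {B : ℝ} {r : ℚ} (hr : 0 ≤ r) {c s n : ℕ} (hn : r.den ∣ n)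
    (hc : 1 ≤ c) (hcB : (c : ℝ) ≤ B ^ 2) (hsB : 10 * (2 * (r : ℝ) + 1) * B ^ 2 ≤ s) :
    2 + (2 * (r.num.toNat * (n / r.den)) + n) * c < (n + 1) * (s + 1) := by
  have hr0 : (0 : ℝ) ≤ r := by exact_mod_cast hr
  have hc1 : (1 : ℝ) ≤ c := by exact_mod_cast hc
  have hcn : (2 * r + 1) * n * c ≤ (2 * (r : ℝ) + 1) * n * B ^ 2 :=
    mul_le_mul_of_nonneg_left hcB (by positivity)
  have hns : (n : ℝ) * (10 * (2 * r + 1) * B ^ 2) ≤ n * s :=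
    mul_le_mul_of_nonneg_left hsB (by positivity)
  have hs10 : (10 : ℝ) ≤ s := by nlinarith
  have hreal : (2 : ℝ) + ((2 * (r.num.toNat * (n / r.den)) + n : ℕ) : ℝ) * c <
      (n + 1) * (s + 1) := by
    rw [cast_two_mul_num_mul_div_den_add hr hn]
    nlinarith
  exact_mod_cast hreal

theorem linear_forms_lemma_general
    (B : ℝ) (r : ℚ) (hr : 0 < r)
    (Psi : Finset ℕ) (hPsi : ∀ b : ℕ, b ∈ Psi ↔ 0 < b ∧ (Nat.totient b : ℝ) ≤ B)
    (s : ℕ) (hs : Odd s) (hsB : 10 * (2 * (r : ℝ) + 1) * B ^ 2 ≤ (s : ℝ))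
    (hFB : ((zeroSet Psi).card : ℝ) ≤ B ^ 2)
    (n : ℕ) (hPn : Pconst Psi r ∣ n)
    (a : ℕ → ℕ → ℚ)
    (ha : ∀ t : ℝ, (∀ k ∈ Finset.range (n + 1), t + (k : ℝ) ≠ 0) →
      Rfun Psi r s n t = ∑ i ∈ Finset.Icc 1 s, ∑ k ∈ Finset.range (n + 1),
        (a i k : ℝ) / (t + (k : ℝ)) ^ i) :
    ∀ θ ∈ zeroSet Psi,
      HasSum (fun m : ℕ => Rfun Psi r s n ((m : ℝ) + 1 + (θ : ℝ)))
        (((- ∑ k ∈ Finset.range (n + 1), ∑ ℓ ∈ Finset.range (k + 1),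
            ∑ i ∈ Finset.Icc 1 s, a i k / ((ℓ : ℚ) + θ) ^ i : ℚ) : ℝ) +
          ∑ i ∈ (Finset.Icc 3 s).filter (fun i => Odd i),
            ((∑ k ∈ Finset.range (n + 1), a i k : ℚ) : ℝ) *
              hurwitzZetaValue i (θ : ℝ)) := by
  intro θ hθ
  have hθ0 : (0 : ℝ) < θ := by exact_mod_cast pos_of_mem_zeroSet hθ
  obtain ⟨b, hb, -⟩ := mem_zeroSet.mp hθ
  have hB1 : 1 ≤ B :=
    le_trans (by exact_mod_cast Nat.totient_pos.mpr ((hPsi b).mp hb).1) ((hPsi b).mp hb).2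
  have h1 : 1 ∈ Psi := (hPsi 1).mpr ⟨one_pos, by simpa using hB1⟩
  have hn : 2 * r.den ∣ n := dvd_trans (Dvd.intro _ rfl) hPn
  have hdeg := two_add_mul_lt_mul_of_le_sq hr.le (dvd_of_mul_left_dvd hn)
    (card_pos.mpr ⟨θ, hθ⟩) hFB hsB
  have hρ1 : ∑ k ∈ range (n + 1), (a 1 k : ℝ) = 0 :=
    sum_coeff_one_eq_zero_of_tendsto hs.pos ha (tendsto_mul_Rfun_atTop hdeg)
  have hρeven : ∀ i ∈ Icc 1 s, Even i → ∑ k ∈ range (n + 1), (a i k : ℝ) = 0 := fun i hi =>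
    sum_coeff_eq_zero_of_antisymm ha (Rfun_neg_sub hr.le hn hs h1) hi
  convert (hasSum_partialFractionSum_nat_add_one_add hθ0 hρ1).congr_fun
    fun m => ha _ fun k _ => by positivity using 1
  push_cast
  rw [sum_Icc_one_eq_sum_filter_odd (by simp [hρ1]) fun i hi he => by simp [hρeven i hi he]]

/-- Linear forms: for every `θ ∈ 𝓕_B` the series `r_{n,θ} = ∑_{m=1}^{∞} R_n(m+θ)` converges,
with sum `ρ_{0,θ} + ∑_{3 ≤ i ≤ s, i odd} ρ_i ζ(i,θ)`, where
`ρ_i = ∑_{k=0}^{n} a_{i,k}` (independent of `θ`) and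
`ρ_{0,θ} = −∑_{k=0}^{n}∑_{ℓ=0}^{k}∑_{i=1}^{s} a_{i,k}/(ℓ+θ)ⁱ`. -/
theorem linear_forms_lemma
    (B : ℝ) (hB : 0 < B) (r : ℚ) (hr : 0 < r)
    (Psi : Finset ℕ) (hPsi : ∀ b : ℕ, b ∈ Psi ↔ 0 < b ∧ (Nat.totient b : ℝ) ≤ B)
    (s : ℕ) (hs : Odd s) (hsB : 10 * (2 * (r : ℝ) + 1) * B ^ 2 ≤ (s : ℝ))
    (hFB : ((zeroSet Psi).card : ℝ) ≤ B ^ 2)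
    (n : ℕ) (hn : 0 < n) (hPn : Pconst Psi r ∣ n)
    (a : ℕ → ℕ → ℚ)
    (ha : ∀ t : ℝ, (∀ k ∈ Finset.range (n + 1), t + (k : ℝ) ≠ 0) →
      Rfun Psi r s n t = ∑ i ∈ Finset.Icc 1 s, ∑ k ∈ Finset.range (n + 1),
        (a i k : ℝ) / (t + (k : ℝ)) ^ i) :
    ∀ θ ∈ zeroSet Psi,
      HasSum (fun m : ℕ => Rfun Psi r s n ((m : ℝ) + 1 + (θ : ℝ)))
        (((- ∑ k ∈ Finset.range (n + 1), ∑ ℓ ∈ Finset.range (k + 1),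
            ∑ i ∈ Finset.Icc 1 s, a i k / ((ℓ : ℚ) + θ) ^ i : ℚ) : ℝ) +
          ∑ i ∈ (Finset.Icc 3 s).filter (fun i => Odd i),
            ((∑ k ∈ Finset.range (n + 1), a i k : ℚ) : ℝ) *
              hurwitzZetaValue i (θ : ℝ)) :=
  linear_forms_lemma_general B r hr Psi hPsi s hs hsB hFB n hPn a ha
end
end
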